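/- arXiv:0807.3045 — 3 statements merged into one kernel-verified Lean document; each statement's English description precedes it below -/
import Mathlib

section
/- Let A be an algebraic curvature tensor on a Euclidean vector space such that the Jacobi operator J_A(x) has eigenvalues independent of the unit vector x (Osserman). If x, y are orthonormal vectors with J_A(x)z = λz and J_A(y)z = μz for a unit vector z orthogonal to both x and y, and additionally A(x,z)y + A(y,z)x = 0, then λ = μ. -/
open scoped RealInnerProductSpace

/-- For an Osserman algebraic curvature tensor `A` on a Euclidean vector
space, if `x, y` are orthonormal, `z` is a unit vector orthogonal to both with
`J_A(x)z = λ z`, `J_A(y)z = μ z`, and `A(x,z)y + A(y,z)x = 0`, then `λ = μ`. -/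
theorem osserman_rotation_eigenvalue
    {V : Type*} [NormedAddCommGroup V] [InnerProductSpace ℝ V]
    [FiniteDimensional ℝ V]
    (A : V →ₗ[ℝ] V →ₗ[ℝ] V →ₗ[ℝ] V)
    (hanti1 : ∀ x y z : V, A x y z = - A y x z)
    (hanti2 : ∀ x y z w : V, ⟪A x y z, w⟫ = - ⟪A x y w, z⟫)
    (hpair : ∀ x y z w : V, ⟪A x y z, w⟫ = ⟪A z w x, y⟫)
    (hbianchi : ∀ x y z : V, A x y z + A y z x + A z x y = 0)
    (J : V → V →ₗ[ℝ] V) (hJ : ∀ x y : V, J x y = A x y x)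
    -- Osserman: the characteristic polynomial of `J_A(x)` is the same for all unit `x`
    (hOss : ∀ x y : V, ‖x‖ = 1 → ‖y‖ = 1 → (J x).charpoly = (J y).charpoly)
    (x y z : V) (hx : ‖x‖ = 1) (hy : ‖y‖ = 1) (hz : ‖z‖ = 1)
    (hxy : ⟪x, y⟫ = 0) (hxz : ⟪x, z⟫ = 0) (hyz : ⟪y, z⟫ = 0)
    (lam mu : ℝ) (hlam : J x z = lam • z) (hmu : J y z = mu • z)
    (hmix : A x z y + A y z x = 0) :
    lam = mu := by
  by_contra hne
  have hz0 : z ≠ 0 := by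
    intro h; rw [h, norm_zero] at hz; norm_num at hz
  -- the unit vector u t
  set p := (J x).charpoly with hp
  have key : ∀ t : ℝ, t ∈ Set.Icc (0:ℝ) 1 → p.IsRoot ((1 - t) * lam + t * mu) := by
    intro t ht
    obtain ⟨ht0, ht1⟩ := ht
    set a := Real.sqrt (1 - t) with ha
    set b := Real.sqrt t with hb
    have ha2 : a ^ 2 = 1 - t := Real.sq_sqrt (by linarith)
    have hb2 : b ^ 2 = t := Real.sq_sqrt ht0
    set u := a • x + b • y with hu
    have hx2 : ⟪x, x⟫ = (1:ℝ) := by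
      rw [real_inner_self_eq_norm_sq, hx]; norm_num
    have hy2 : ⟪y, y⟫ = (1:ℝ) := by
      rw [real_inner_self_eq_norm_sq, hy]; norm_num
    have hyx : ⟪y, x⟫ = (0:ℝ) := by rw [real_inner_comm]; exact hxy
    have hun : ‖u‖ = 1 := by
      have : ‖u‖ ^ 2 = 1 := by
        rw [← real_inner_self_eq_norm_sq, hu]
        simp only [inner_add_add_self, real_inner_smul_left, real_inner_smul_right,
          hx2, hy2, hxy, hyx]
        ring_nf
        nlinarith [ha2, hb2]
      nlinarith [norm_nonneg u]
    -- J u z = ((1-t)λ + tμ) • z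
    have hJu : J u z = ((1 - t) * lam + t * mu) • z := by
      rw [hJ, hu]
      have hAx : A x z x = lam • z := by rw [← hJ, hlam]
      have hAy : A y z y = mu • z := by rw [← hJ, hmu]
      simp only [map_add, map_smul, LinearMap.add_apply, LinearMap.smul_apply]
      rw [hAx, hAy, eq_neg_of_add_eq_zero_left hmix]
      match_scalars
      · linear_combination lam * ha2 + mu * hb2
      · ring
    have hev : Module.End.HasEigenvalue (J u) ((1 - t) * lam + t * mu) :=
      Module.End.hasEigenvalue_of_hasEigenvector ⟨by
        rw [Module.End.mem_eigenspace_iff]; exact hJu, hz0⟩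
    have hroot : (minpoly ℝ (J u)).IsRoot ((1 - t) * lam + t * mu) :=
      (Module.End.hasEigenvalue_iff_isRoot).mp hev
    have hdvd : minpoly ℝ (J u) ∣ (J u).charpoly := LinearMap.minpoly_dvd_charpoly (J u)
    have : ((J u).charpoly).IsRoot ((1 - t) * lam + t * mu) :=
      hroot.dvd hdvd
    rwa [hOss u x hun hx] at this
  -- p has infinitely many roots: contradiction
  have hpne : p ≠ 0 := (LinearMap.charpoly_monic (J x)).ne_zero
  have hinj : Set.InjOn (fun t : ℝ => (1 - t) * lam + t * mu) (Set.Icc 0 1) := by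
    intro s _ t _ h
    simp only at h
    have : (t - s) * (lam - mu) = 0 := by ring_nf; nlinarith [h]
    rcases mul_eq_zero.mp this with h1 | h2
    · linarith
    · exact absurd (by linarith) hne
  have hfin : Set.Finite {r : ℝ | p.IsRoot r} := Polynomial.finite_setOf_isRoot hpne
  have hsub : (fun t : ℝ => (1 - t) * lam + t * mu) '' (Set.Icc 0 1) ⊆ {r | p.IsRoot r} := by
    rintro r ⟨t, ht, rfl⟩; exact key t ht
  have hIccInf : (Set.Icc (0:ℝ) 1).Infinite := Set.Icc_infinite (by norm_num)
  exact ((Set.infinite_image_iff hinj).mpr hIccInf).mono hsub hfin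
end

section
/- Let W be a trace-free (Weyl-type) Osserman algebraic curvature tensor on a Euclidean vector space of dimension n ≥ 2. If there is a unit vector v and an orthonormal basis {e_1,...,e_{n-1},v} of eigenvectors of J_W(v) such that W(e_i,v)e_j = 0 for all i ≠ j, then W = 0. -/
/-!
Write `J_x = W(x, ·)x`. Duality turns `J_v e_i = λ_i e_i` into `J_{e_i} v = λ_i v`; since the mixed
terms `W(e_i, v)e_j` vanish, the unit vector `u = (e_i + e_j)/√2` has `J_u v = ((λ_i + λ_j)/2) v`,
and duality again makes `u` an eigenvector of `J_v`, forcing `λ_i = λ_j` for `i, j` off `v`.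
As `λ_v = 0` and the trace of `J_v` vanishes, `J_v = 0`. All `J_x` (`‖x‖ = 1`) then share the
characteristic polynomial `X^n`, so being symmetric they vanish, and by polarisation and the
Bianchi identity so does `W`.
-/

open scoped RealInnerProductSpace

theorem LinearMap.IsSymmetric.eq_zero_of_isNilpotent {𝕜 E : Type*} [RCLike 𝕜]
    [NormedAddCommGroup E] [InnerProductSpace 𝕜 E] [FiniteDimensional 𝕜 E] {T : E →ₗ[𝕜] E}
    (hT : T.IsSymmetric) (hnil : IsNilpotent T) : T = 0 := by
  let e := hT.eigenvectorBasis rfl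
  refine e.toBasis.ext fun i => ?_
  have hμ : (hT.eigenvalues rfl i : 𝕜) = 0 :=
    ((hT.hasEigenvalue_eigenvalues rfl i).isNilpotent_of_isNilpotent hnil).eq_zero
  rw [e.coe_toBasis, hT.apply_eigenvectorBasis, hμ]
  simp

theorem Fintype.eq_zero_of_sum_eq_zero_of_eq_off {ι M : Type*} [Fintype ι] [AddCommGroup M]
    [IsAddTorsionFree M] {f : ι → M} {i₀ : ι} (h₀ : f i₀ = 0)
    (hconst : ∀ i j, i ≠ i₀ → j ≠ i₀ → f i = f j) (hsum : ∑ i, f i = 0) (i : ι) : f i = 0 := by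
  classical
  by_cases hi : i = i₀
  · rwa [hi]
  have hcard : (Finset.univ.erase i₀).card ≠ 0 :=
    Finset.card_ne_zero_of_mem (Finset.mem_erase.mpr ⟨hi, Finset.mem_univ i⟩)
  rw [← Finset.add_sum_erase _ _ (Finset.mem_univ i₀), h₀, zero_add,
    Finset.sum_congr rfl fun j hj => hconst j i (Finset.ne_of_mem_erase hj) hi,
    Finset.sum_const] at hsum
  exact (nsmul_eq_zero_iff_right hcard).mp hsum

section Jacobi

variable {R M : Type*} [CommSemiring R] [AddCommMonoid M] [Module R M]

def jacobi (W : M →ₗ[R] M →ₗ[R] M →ₗ[R] M) (x : M) : M →ₗ[R] M := (W x).flip x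

variable (W : M →ₗ[R] M →ₗ[R] M →ₗ[R] M)

@[simp]
theorem jacobi_apply (x y : M) : jacobi W x y = W x y x := rfl

theorem jacobi_smul (t : R) (x : M) : jacobi W (t • x) = (t * t) • jacobi W x := by
  ext y
  simp [mul_smul]

end Jacobi

section RealModule

variable {M : Type*} [AddCommGroup M] [Module ℝ M] {W : M →ₗ[ℝ] M →ₗ[ℝ] M →ₗ[ℝ] M}

theorem jacobi_self (hanti : ∀ x y z : M, W x y z = - W y x z) (x : M) : jacobi W x x = 0 := by
  have h := hanti x x x
  rw [jacobi_apply]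
  linear_combination (norm := module) (2 : ℝ)⁻¹ • h

theorem eq_zero_of_jacobi_eq_zero (hanti : ∀ x y z : M, W x y z = - W y x z)
    (hbianchi : ∀ x y z : M, W x y z + W y z x + W z x y = 0) (h : ∀ x, jacobi W x = 0) :
    W = 0 := by
  have hswap : ∀ x y z, W x y z = - W z y x := by
    intro x y z
    have hx := congrArg (· y) (h x)
    have hz := congrArg (· y) (h z)
    have hxz := congrArg (· y) (h (x + z))
    simp only [jacobi_apply, map_add, LinearMap.add_apply, LinearMap.zero_apply] at hx hz hxz
    linear_combination (norm := module) hxz - hx - hz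
  -- `hanti` and `hswap` make `W` alternating, so each term of the Bianchi identity is `W x y z`
  ext x y z
  rw [LinearMap.zero_apply, LinearMap.zero_apply, LinearMap.zero_apply]
  linear_combination (norm := module) (3 : ℝ)⁻¹ • (hbianchi x y z - hswap y z x + hanti x z y
    - (2 : ℝ) • hswap z x y + (2 : ℝ) • hanti y x z)

end RealModule

section InnerProduct

variable {V : Type*} [NormedAddCommGroup V] [InnerProductSpace ℝ V]
  {W : V →ₗ[ℝ] V →ₗ[ℝ] V →ₗ[ℝ] V}

theorem isSymmetric_jacobi (hpair : ∀ x y z w : V, ⟪W x y z, w⟫ = ⟪W z w x, y⟫) (x : V) :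
    (jacobi W x).IsSymmetric := fun y z => by
  rw [jacobi_apply, jacobi_apply, hpair, real_inner_comm]

theorem jacobi_eq_zero_of_charpoly_eq [FiniteDimensional ℝ V]
    (hpair : ∀ x y z w : V, ⟪W x y z, w⟫ = ⟪W z w x, y⟫) {x v : V}
    (hchar : (jacobi W x).charpoly = (jacobi W v).charpoly) (hv : jacobi W v = 0) :
    jacobi W x = 0 := by
  refine (isSymmetric_jacobi hpair x).eq_zero_of_isNilpotent ?_
  rw [LinearMap.isNilpotent_iff_charpoly, hchar, hv, LinearMap.charpoly_zero]

theorem jacobi_eq_zero_of_norm_eq_one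
    (h : ∀ u : V, ‖u‖ = 1 → jacobi W u = 0) (x : V) : jacobi W x = 0 := by
  by_cases hx : x = 0
  · ext; simp [hx]
  have hxu : x = ‖x‖ • ((‖x‖⁻¹ : ℝ) • x) := by
    rw [smul_smul, mul_inv_cancel₀ (norm_ne_zero_iff.mpr hx), one_smul]
  rw [hxu, jacobi_smul, h _ (by simpa using norm_smul_inv_norm (𝕜 := ℝ) hx), smul_zero]

theorem jacobi_eigenvalue_eq_of_duality
    (hdual : ∀ (x y : V) (lam : ℝ), ‖x‖ = 1 → ‖y‖ = 1 →
      (jacobi W x y = lam • y ↔ jacobi W y x = lam • x))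
    {v a b : V} (hv : ‖v‖ = 1) (ha : ‖a‖ = 1) (hb : ‖b‖ = 1) (hab : ⟪a, b⟫ = 0)
    {la lb : ℝ} (hla : jacobi W v a = la • a) (hlb : jacobi W v b = lb • b)
    (hWab : W a v b = 0) (hWba : W b v a = 0) : la = lb := by
  have hWa : W a v a = la • v := (hdual v a la hv ha).mp hla
  have hWb : W b v b = lb • v := (hdual v b lb hv hb).mp hlb
  have hne : a + b ≠ 0 := by
    intro h
    rw [add_eq_zero_iff_eq_neg.mp h, inner_neg_left, real_inner_self_eq_norm_sq, hb] at hab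
    norm_num at hab
  set c : ℝ := ‖a + b‖⁻¹
  have hcc : c * c = 2⁻¹ := by
    rw [← mul_inv, ← sq, norm_add_sq_real, ha, hb, hab]
    norm_num
  have hu : ‖c • (a + b)‖ = 1 := by simpa using norm_smul_inv_norm (𝕜 := ℝ) hne
  have hJu : jacobi W (c • (a + b)) v = ((c * c) * (la + lb)) • v := by
    simp only [jacobi_smul, LinearMap.smul_apply, jacobi_apply, map_add, LinearMap.add_apply,
      hWa, hWb, hWab, hWba]
    module
  -- duality: `J_v u = c (la a + lb b)` is the multiple `((la + lb) / 2) u`; compare `a`-components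
  have hJv := congrArg (⟪·, a⟫) ((hdual _ v _ hu hv).mp hJu)
  simp only [map_smul, map_add, hla, hlb, real_inner_smul_left, inner_add_left,
    real_inner_comm a b, hab, real_inner_self_eq_norm_sq, ha] at hJv
  have hc : c ≠ 0 := inv_ne_zero (norm_ne_zero_iff.mpr hne)
  have hla' : la = c * c * (la + lb) := mul_left_cancel₀ hc (by linear_combination hJv)
  rw [hcc] at hla'
  linarith
end InnerProduct

theorem weyl_osserman_adapted_basis_vanishes_general
    {V : Type*} [NormedAddCommGroup V] [InnerProductSpace ℝ V]
    [FiniteDimensional ℝ V] (n : ℕ)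
    (W : V →ₗ[ℝ] V →ₗ[ℝ] V →ₗ[ℝ] V)
    (hanti1 : ∀ x y z : V, W x y z = - W y x z)
    (hpair : ∀ x y z w : V, ⟪W x y z, w⟫ = ⟪W z w x, y⟫)
    (hbianchi : ∀ x y z : V, W x y z + W y z x + W z x y = 0)
    -- trace-free (zero Ricci contraction)
    (hricci : ∀ (c : OrthonormalBasis (Fin n) ℝ V) (x y : V),
      ∑ i, ⟪W x (c i) y, c i⟫ = 0)
    (J : V → V →ₗ[ℝ] V) (hJ : ∀ x y : V, J x y = W x y x)
    -- Osserman: constant eigenvalues on the unit sphere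
    (hOss : ∀ x y : V, ‖x‖ = 1 → ‖y‖ = 1 → (J x).charpoly = (J y).charpoly)
    -- Rakić duality principle (may be assumed)
    (hdual : ∀ (x y : V) (lam : ℝ), ‖x‖ = 1 → ‖y‖ = 1 →
      (J x y = lam • y ↔ J y x = lam • x))
    -- the adapted orthonormal basis `{e_1,…,e_{n-1},v}`
    (b : OrthonormalBasis (Fin n) ℝ V) (i₀ : Fin n) (v : V) (hv : v = b i₀)
    (heig : ∀ i : Fin n, ∃ lam : ℝ, J v (b i) = lam • b i)
    (hW0 : ∀ i j : Fin n, i ≠ i₀ → j ≠ i₀ → i ≠ j → W (b i) v (b j) = 0) :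
    ∀ x y z : V, W x y z = 0 := by
  obtain rfl : J = jacobi W := funext fun x => LinearMap.ext (hJ x)
  subst hv
  choose lam hlam using heig
  have hlam₀ : lam i₀ = 0 := by
    have h := hlam i₀
    rw [jacobi_self hanti1, eq_comm, smul_eq_zero] at h
    exact h.resolve_right (b.orthonormal.ne_zero i₀)
  have hconst (i j : Fin n) (hi : i ≠ i₀) (hj : j ≠ i₀) : lam i = lam j := by
    rcases eq_or_ne i j with rfl | hij
    · rfl
    exact jacobi_eigenvalue_eq_of_duality hdual (b.norm_eq_one i₀) (b.norm_eq_one i)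
      (b.norm_eq_one j) (b.orthonormal.2 hij) (hlam i) (hlam j) (hW0 i j hi hj hij)
      (hW0 j i hj hi hij.symm)
  have hsum : ∑ i, lam i = 0 := by
    simpa [← jacobi_apply, hlam, real_inner_smul_left] using hricci b (b i₀) (b i₀)
  have hJv : jacobi W (b i₀) = 0 := b.toBasis.ext fun i => by
    simp [hlam, Fintype.eq_zero_of_sum_eq_zero_of_eq_off hlam₀ hconst hsum i]
  have hW := eq_zero_of_jacobi_eq_zero hanti1 hbianchi <| jacobi_eq_zero_of_norm_eq_one
    fun u hu => jacobi_eq_zero_of_charpoly_eq hpair (hOss u _ hu (b.norm_eq_one i₀)) hJv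
  simp [hW]

/-- Let `W` be a trace-free (Weyl-type) Osserman algebraic curvature
tensor on a Euclidean space of dimension `n ≥ 2`.  If there is a unit vector `v`
and an orthonormal basis `{e_1, …, e_{n-1}, v}` of eigenvectors of `J_W(v)` such
that `W(e_i,v)e_j = 0` for all `i ≠ j`, then `W = 0`. -/
theorem weyl_osserman_adapted_basis_vanishes
    {V : Type*} [NormedAddCommGroup V] [InnerProductSpace ℝ V]
    [FiniteDimensional ℝ V] (n : ℕ) (hn2 : 2 ≤ n)
    (hdim : Module.finrank ℝ V = n)
    (W : V →ₗ[ℝ] V →ₗ[ℝ] V →ₗ[ℝ] V)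
    (hanti1 : ∀ x y z : V, W x y z = - W y x z)
    (hanti2 : ∀ x y z w : V, ⟪W x y z, w⟫ = - ⟪W x y w, z⟫)
    (hpair : ∀ x y z w : V, ⟪W x y z, w⟫ = ⟪W z w x, y⟫)
    (hbianchi : ∀ x y z : V, W x y z + W y z x + W z x y = 0)
    -- trace-free (zero Ricci contraction)
    (hricci : ∀ (c : OrthonormalBasis (Fin n) ℝ V) (x y : V),
      ∑ i, ⟪W x (c i) y, c i⟫ = 0)
    (J : V → V →ₗ[ℝ] V) (hJ : ∀ x y : V, J x y = W x y x)
    -- Osserman: constant eigenvalues on the unit sphere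
    (hOss : ∀ x y : V, ‖x‖ = 1 → ‖y‖ = 1 → (J x).charpoly = (J y).charpoly)
    -- Rakić duality principle (may be assumed)
    (hdual : ∀ (x y : V) (lam : ℝ), ‖x‖ = 1 → ‖y‖ = 1 →
      (J x y = lam • y ↔ J y x = lam • x))
    -- the adapted orthonormal basis `{e_1,…,e_{n-1},v}`
    (b : OrthonormalBasis (Fin n) ℝ V) (i₀ : Fin n) (v : V) (hv : v = b i₀)
    (heig : ∀ i : Fin n, ∃ lam : ℝ, J v (b i) = lam • b i)
    (hW0 : ∀ i j : Fin n, i ≠ i₀ → j ≠ i₀ → i ≠ j → W (b i) v (b j) = 0) :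
    ∀ x y z : V, W x y z = 0 :=
  weyl_osserman_adapted_basis_vanishes_general n W hanti1 hpair hbianchi hricci J hJ hOss hdual b i₀
    v hv heig hW0
end

section
/- Let W be a trace-free Osserman algebraic curvature tensor on Euclidean space V = V_B ⊕ V_F (orthogonal direct sum, both summands nonzero) such that W(x,u)y ∈ V_B and W(x,u)v ∈ V_F for x,y ∈ V_B, u,v ∈ V_F, and mixed components W(x,u,y,·)|_{V_F} and W(u,x,v,·)|_{V_B} vanish for orthogonal arguments. If additionally each vector of V_F is an eigenvector of J_W(x) for every unit x ∈ V_B and vice versa, then W = 0. -/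
/-!
Preservation of the factors and the eigenvector conditions force `R(x,u)x = 0` and `R(u,x)u = 0`
for `x ∈ V_B`, `u ∈ V_F`; together with the vanishing of the orthogonal mixed components and the
curvature identities this kills every component of `R` with arguments in both factors. For unit
`x ∈ V_B`, `u ∈ V_F` the unit vector `w = (x + u)/√2` then has `J w = (J x + J u)/2` with
`J x ∘ J u = 0`, so `tr (J w)² = (tr (J x)² + tr (J u)²)/4`. The Osserman condition makes the
three traces equal, so they vanish; hence `J = 0` on both factors, on all of `V` by additivity,
and `R = 0`.
-/

open scoped RealInnerProductSpace

namespace LinearMap.IsSymmetric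

section RCLike

variable {𝕜 E : Type*} [RCLike 𝕜] [NormedAddCommGroup E] [InnerProductSpace 𝕜 E]
  [FiniteDimensional 𝕜 E] {n : ℕ}

theorem trace_comp_self_eq_sum_sq {T : E →ₗ[𝕜] E} (hT : T.IsSymmetric)
    (hn : Module.finrank 𝕜 E = n) :
    (T ∘ₗ T).trace 𝕜 E = ∑ i, (hT.eigenvalues hn i : 𝕜) ^ 2 := by
  rw [trace_eq_sum_inner _ (hT.eigenvectorBasis hn)]
  refine Finset.sum_congr rfl fun i _ => ?_
  simp [hT.apply_eigenvectorBasis, inner_smul_right, sq]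

end RCLike

section Real

variable {E : Type*} [NormedAddCommGroup E] [InnerProductSpace ℝ E] [FiniteDimensional ℝ E]

theorem trace_comp_self_eq_of_charpoly_eq {S T : E →ₗ[ℝ] E} (hS : S.IsSymmetric)
    (hT : T.IsSymmetric) (h : S.charpoly = T.charpoly) :
    (S ∘ₗ S).trace ℝ E = (T ∘ₗ T).trace ℝ E := by
  rw [hS.trace_comp_self_eq_sum_sq rfl, hT.trace_comp_self_eq_sum_sq rfl,
    (hS.eigenvalues_eq_eigenvalues_iff rfl hT rfl).mpr h]

theorem eq_zero_of_trace_comp_self_eq_zero {T : E →ₗ[ℝ] E} (hT : T.IsSymmetric)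
    (h : (T ∘ₗ T).trace ℝ E = 0) : T = 0 := by
  simp only [hT.trace_comp_self_eq_sum_sq rfl, RCLike.ofReal_real_eq_id, id_eq,
    Finset.sum_eq_zero_iff_of_nonneg fun i _ => sq_nonneg _, Finset.mem_univ, forall_const,
    sq_eq_zero_iff] at h
  refine (hT.eigenvectorBasis rfl).toBasis.ext fun i => ?_
  simp [hT.apply_eigenvectorBasis, h i]

theorem eq_zero_of_charpoly_eq_smul_add {S T : E →ₗ[ℝ] E} (hS : S.IsSymmetric)
    (hT : T.IsSymmetric) (hST : S ∘ₗ T = 0) {t : ℝ} (ht : 2 * t ^ 2 ≠ 1)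
    (h₁ : S.charpoly = T.charpoly) (h₂ : S.charpoly = (t • (S + T)).charpoly) :
    S = 0 ∧ T = 0 := by
  have hsum : (t • (S + T)).IsSymmetric := (hS.add hT).smul (by simp)
  have hTS : (T ∘ₗ S).trace ℝ E = 0 := by rw [trace_comp_comm', hST, map_zero]
  have hsq : ((t • (S + T)) ∘ₗ (t • (S + T))).trace ℝ E
      = t ^ 2 * ((S ∘ₗ S).trace ℝ E + (T ∘ₗ T).trace ℝ E) := by
    simp only [smul_comp, comp_smul, add_comp, comp_add, hST, map_smul, map_add, hTS, map_zero,
      smul_eq_mul]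
    ring
  have hSS : (S ∘ₗ S).trace ℝ E = 0 := by
    rw [← hS.trace_comp_self_eq_of_charpoly_eq hsum h₂,
      ← hS.trace_comp_self_eq_of_charpoly_eq hT h₁] at hsq
    have : (1 - 2 * t ^ 2) * (S ∘ₗ S).trace ℝ E = 0 := by linarith
    exact (mul_eq_zero.mp this).resolve_left (sub_ne_zero.mpr ht.symm)
  exact ⟨hS.eq_zero_of_trace_comp_self_eq_zero hSS,
    hT.eq_zero_of_trace_comp_self_eq_zero (hS.trace_comp_self_eq_of_charpoly_eq hT h₁ ▸ hSS)⟩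

end Real

end LinearMap.IsSymmetric

theorem Submodule.exists_mem_norm_eq_one {𝕜 E : Type*} [RCLike 𝕜] [NormedAddCommGroup E]
    [NormedSpace 𝕜 E] {K : Submodule 𝕜 E} (hK : 1 ≤ Module.finrank 𝕜 K) : ∃ x ∈ K, ‖x‖ = 1 := by
  obtain ⟨x, hx, hx0⟩ := K.ne_bot_iff.mp (by rintro rfl; simp at hK)
  exact ⟨_, K.smul_mem _ hx, norm_smul_inv_norm (𝕜 := 𝕜) hx0⟩

section Curvature

variable {V : Type*} [NormedAddCommGroup V] [InnerProductSpace ℝ V]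

/-- An algebraic curvature tensor in `(1,3)`-form, `⟪R x y z, w⟫ = R(x,y,z,w)`; antisymmetry in
`x, y` is a consequence (`IsCurvatureTensor.apply_swap`). -/
structure IsCurvatureTensor (R : V →ₗ[ℝ] V →ₗ[ℝ] V →ₗ[ℝ] V) : Prop where
  inner_apply_swap : ∀ x y z w : V, ⟪R x y z, w⟫ = -⟪R x y w, z⟫
  inner_apply_comm : ∀ x y z w : V, ⟪R x y z, w⟫ = ⟪R z w x, y⟫
  bianchi : ∀ x y z : V, R x y z + R y z x + R z x y = 0

def jacobiOperator (R : V →ₗ[ℝ] V →ₗ[ℝ] V →ₗ[ℝ] V) (x : V) : V →ₗ[ℝ] V := (R x).flip x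

def IsOsserman [FiniteDimensional ℝ V] (R : V →ₗ[ℝ] V →ₗ[ℝ] V →ₗ[ℝ] V) : Prop :=
  ∀ x y : V, ‖x‖ = 1 → ‖y‖ = 1 → (jacobiOperator R x).charpoly = (jacobiOperator R y).charpoly

variable {R : V →ₗ[ℝ] V →ₗ[ℝ] V →ₗ[ℝ] V}

@[simp]
theorem jacobiOperator_apply (x y : V) : jacobiOperator R x y = R x y x := rfl

theorem jacobiOperator_smul (c : ℝ) (x : V) :
    jacobiOperator R (c • x) = c ^ 2 • jacobiOperator R x := by
  ext y
  simp [smul_smul, sq]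

theorem jacobiOperator_apply_mem_of_forall_norm_eq_one {K M : Submodule ℝ V} {y : V}
    (h : ∀ x ∈ K, ‖x‖ = 1 → jacobiOperator R x y ∈ M) {x : V} (hx : x ∈ K) :
    jacobiOperator R x y ∈ M := by
  rcases eq_or_ne x 0 with rfl | hx0
  · simp
  have := h _ (K.smul_mem ‖x‖⁻¹ hx) (norm_smul_inv_norm hx0)
  rwa [jacobiOperator_smul, LinearMap.smul_apply, Submodule.smul_mem_iff M (by simpa using hx0)]
    at this

theorem jacobiOperator_eq_zero_of_forall_norm_eq_one {K : Submodule ℝ V}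
    (h : ∀ x ∈ K, ‖x‖ = 1 → jacobiOperator R x = 0) {x : V} (hx : x ∈ K) :
    jacobiOperator R x = 0 :=
  LinearMap.ext fun _ => (Submodule.mem_bot ℝ).mp <|
    jacobiOperator_apply_mem_of_forall_norm_eq_one (fun x hx hx1 => by simp [h x hx hx1]) hx

theorem jacobiOperator_apply_eq_zero_of_disjoint {P Q : Submodule ℝ V} (hPQ : Disjoint P Q)
    {x u : V} (hx : x ∈ P) (hu : u ∈ Q) (hmem : jacobiOperator R x u ∈ P)
    (heig : ∀ x ∈ P, ‖x‖ = 1 → ∃ c : ℝ, jacobiOperator R x u = c • u) :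
    jacobiOperator R x u = 0 :=
  Submodule.disjoint_def.mp hPQ _ hmem <|
    jacobiOperator_apply_mem_of_forall_norm_eq_one (fun x hx hx1 => by
      obtain ⟨c, hc⟩ := heig x hx hx1
      exact hc ▸ Q.smul_mem c hu) hx

theorem apply_swap_of_apply_self {K : Submodule ℝ V} {y : V} (h : ∀ x ∈ K, R x y x = 0)
    {x z : V} (hx : x ∈ K) (hz : z ∈ K) : R x y z = -R z y x := by
  have := h (x + z) (K.add_mem hx hz)
  simp only [map_add, LinearMap.add_apply, h x hx, h z hz, zero_add, add_zero] at this
  exact eq_neg_of_add_eq_zero_right this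

theorem inner_apply_eq_zero_of_forall_inner_eq_zero {K : Submodule ℝ V} {x u w y : V}
    (hx : x ∈ K) (hy : y ∈ K) (h₀ : R x u x = 0)
    (h : ∀ y ∈ K, ⟪x, y⟫ = 0 → ⟪R x u y, w⟫ = 0) : ⟪R x u y, w⟫ = 0 := by
  obtain ⟨a, ha, b, hb, rfl⟩ := (ℝ ∙ x).exists_add_mem_mem_orthogonal y
  obtain ⟨c, rfl⟩ := Submodule.mem_span_singleton.mp ha
  have hbK : b ∈ K := by simpa using K.sub_mem hy (K.smul_mem c hx)
  rw [Submodule.mem_orthogonal_singleton_iff_inner_right] at hb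
  simp [h₀, h b hbK hb]

namespace IsCurvatureTensor

theorem apply_swap (hR : IsCurvatureTensor R) (x y z : V) : R x y z = -R y x z :=
  ext_inner_right ℝ fun w => by
    rw [inner_neg_left, hR.inner_apply_comm, hR.inner_apply_swap, ← hR.inner_apply_comm]

theorem jacobiOperator_isSymmetric (hR : IsCurvatureTensor R) (x : V) :
    (jacobiOperator R x).IsSymmetric := fun y z => by
  rw [jacobiOperator_apply, jacobiOperator_apply, hR.inner_apply_comm, real_inner_comm]

theorem eq_zero_of_jacobiOperator_eq_zero (hR : IsCurvatureTensor R)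
    (h : ∀ x, jacobiOperator R x = 0) : R = 0 := by
  have hswap : ∀ x y z, R x y z = -R z y x := fun x y z =>
    apply_swap_of_apply_self (K := ⊤) (fun x _ => by simp [← jacobiOperator_apply, h])
      trivial trivial
  have htwice : ∀ x y z, R x y z = (2 : ℝ) • R x z y := fun x y z => by
    have := hR.bianchi x y z
    rw [hswap y z x, hR.apply_swap z x y] at this
    linear_combination (norm := module) this
  ext x y z
  have h4 : R x y z = (2 * 2 : ℝ) • R x y z := calc
    R x y z = (2 : ℝ) • R x z y := htwice x y z
    _ = (2 * 2 : ℝ) • R x y z := by rw [htwice x z y, smul_smul]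
  have h3 : (3 : ℝ) • R x y z = 0 := by linear_combination (norm := module) -h4
  simpa using h3

theorem inner_apply_eq_zero_of_apply_self_eq_zero (hR : IsCurvatureTensor R) {K : Submodule ℝ V}
    {u : V} (hu : ∀ x ∈ K, R x u x = 0) {x y z : V} (hx : x ∈ K) (hy : y ∈ K) (hz : z ∈ K) :
    ⟪R x u y, z⟫ = 0 := by
  have h₁ : ∀ {a b}, a ∈ K → b ∈ K → ∀ c, ⟪R a u b, c⟫ = -⟪R b u a, c⟫ := fun ha hb c => by
    rw [apply_swap_of_apply_self hu ha hb, inner_neg_left]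
  have hcyc : ⟪R x u y, z⟫ + ⟪R y u z, x⟫ + ⟪R z u x, y⟫ = 0 := by
    have := congrArg (⟪·, u⟫) (hR.bianchi y z x)
    simp only [inner_add_left, inner_zero_left] at this
    rwa [hR.inner_apply_comm y z, hR.inner_apply_comm z x, hR.inner_apply_comm x y] at this
  have := hR.inner_apply_swap x u y z
  have := hR.inner_apply_swap y u z x
  have := hR.inner_apply_swap z u x y
  linarith [h₁ hx hy z, h₁ hy hz x, h₁ hz hx y]

theorem apply_eq_zero_comm (hR : IsCurvatureTensor R) {x u : V} (h : ∀ v, R x v u = 0)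
    (v : V) : R u v x = 0 :=
  ext_inner_right ℝ fun d => by rw [hR.inner_apply_comm, h, inner_zero_left, inner_zero_left]

theorem jacobiOperator_add (hR : IsCurvatureTensor R) {x u : V} (h : ∀ v, R x v u = 0) :
    jacobiOperator R (x + u) = jacobiOperator R x + jacobiOperator R u := by
  ext v
  simp [h, hR.apply_eq_zero_comm h]

theorem apply_eq_zero_of_mem_orthogonal (hR : IsCurvatureTensor R) {K : Submodule ℝ V}
    [K.HasOrthogonalProjection] (hK : ∀ x ∈ K, ∀ u ∈ Kᗮ, R x u x = 0)
    (hKc : ∀ u ∈ Kᗮ, ∀ x ∈ K, R u x u = 0)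
    (hmix : ∀ x y, x ∈ K → y ∈ K → ⟪x, y⟫ = 0 → ∀ u w, u ∈ Kᗮ → w ∈ Kᗮ → ⟪R x u y, w⟫ = 0)
    {x u : V} (hx : x ∈ K) (hu : u ∈ Kᗮ) (v : V) : R x v u = 0 := by
  have hBFBF : ∀ {a b f g}, a ∈ K → b ∈ K → f ∈ Kᗮ → g ∈ Kᗮ → ⟪R a f b, g⟫ = 0 :=
    fun ha hb hf hg => inner_apply_eq_zero_of_forall_inner_eq_zero ha hb (hK _ ha _ hf)
      fun y hy hay => hmix _ y ha hy hay _ _ hf hg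
  refine ext_inner_right ℝ fun d => ?_
  obtain ⟨v₁, hv₁, v₂, hv₂, rfl⟩ := K.exists_add_mem_mem_orthogonal v
  obtain ⟨d₁, hd₁, d₂, hd₂, rfl⟩ := K.exists_add_mem_mem_orthogonal d
  have hBBFB : ⟪R x v₁ u, d₁⟫ = 0 := by
    rw [hR.inner_apply_comm, hR.apply_swap, inner_neg_left,
      hR.inner_apply_eq_zero_of_apply_self_eq_zero (fun a ha => hK a ha u hu) hd₁ hx hv₁,
      neg_zero]
  have hBBFF : ⟪R x v₁ u, d₂⟫ = 0 := by
    have := congrArg (⟪·, d₂⟫) (hR.bianchi x v₁ u)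
    simp only [inner_add_left, inner_zero_left, hBFBF hv₁ hx hu hd₂] at this
    rw [hR.apply_swap u, inner_neg_left, hBFBF hx hv₁ hu hd₂] at this
    simpa using this
  have hBFFB : ⟪R x v₂ u, d₁⟫ = 0 := by
    rw [hR.inner_apply_swap, hBFBF hx hd₁ hv₂ hu, neg_zero]
  have hBFFF : ⟪R x v₂ u, d₂⟫ = 0 := by
    rw [hR.apply_swap, inner_neg_left, hR.inner_apply_eq_zero_of_apply_self_eq_zero
      (fun a ha => hKc a ha x hx) hv₂ hu hd₂, neg_zero]
  simp [inner_add_left, inner_add_right, hBBFB, hBBFF, hBFFB, hBFFF]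

theorem jacobiOperator_eq_zero_of_isOsserman [FiniteDimensional ℝ V] (hR : IsCurvatureTensor R)
    (hOss : IsOsserman R) {K : Submodule ℝ V} (hsplit : ∀ x ∈ K, ∀ u ∈ Kᗮ, ∀ v, R x v u = 0)
    {x u : V} (hx : x ∈ K) (hu : u ∈ Kᗮ) (hx1 : ‖x‖ = 1) (hu1 : ‖u‖ = 1) :
    jacobiOperator R x = 0 ∧ jacobiOperator R u = 0 := by
  have hcomp : jacobiOperator R x ∘ₗ jacobiOperator R u = 0 := by
    ext v
    have hJu : jacobiOperator R u v ∈ Kᗮ := fun z hz => by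
      rw [← hR.jacobiOperator_isSymmetric u, jacobiOperator_apply, hR.apply_swap,
        hsplit z hz u hu, neg_zero, inner_zero_left]
    rw [LinearMap.comp_apply, jacobiOperator_apply, hR.apply_swap,
      hR.apply_eq_zero_comm (hsplit x hx _ hJu), neg_zero, LinearMap.zero_apply]
  have hxu : ‖x + u‖ = √2 := by
    rw [← Real.sqrt_sq (norm_nonneg _), norm_add_sq_real, K.inner_right_of_mem_orthogonal hx hu,
      hx1, hu1]
    norm_num
  set w := (√2)⁻¹ • (x + u)
  have hw1 : ‖w‖ = 1 := by
    rw [norm_smul, hxu, norm_inv, Real.norm_of_nonneg (Real.sqrt_nonneg 2)]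
    exact inv_mul_cancel₀ (by positivity)
  have hJw : jacobiOperator R w = (1 / 2 : ℝ) • (jacobiOperator R x + jacobiOperator R u) := by
    rw [jacobiOperator_smul, hR.jacobiOperator_add (hsplit x hx u hu)]
    norm_num
  exact (hR.jacobiOperator_isSymmetric x).eq_zero_of_charpoly_eq_smul_add
    (hR.jacobiOperator_isSymmetric u) hcomp (by norm_num) (hOss x u hx1 hu1)
    (hJw ▸ hOss x w hx1 hw1)

end IsCurvatureTensor

end Curvature

theorem product_weyl_osserman_vanishes_general
    {V : Type*} [NormedAddCommGroup V] [InnerProductSpace ℝ V]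
    [FiniteDimensional ℝ V]
    (VB : Submodule ℝ V) (VF : Submodule ℝ V) (hVF : VF = VBᗮ)
    (hB : 1 ≤ Module.finrank ℝ VB) (hF : 1 ≤ Module.finrank ℝ VF)
    (Wv : V →ₗ[ℝ] V →ₗ[ℝ] V →ₗ[ℝ] V)
    (W : V → V → V → V → ℝ) (hWdef : ∀ x y z w : V, W x y z w = ⟪Wv x y z, w⟫)
    (hanti2 : ∀ x y z w : V, W x y z w = - W x y w z)
    (hpair : ∀ x y z w : V, W x y z w = W z w x y)
    (hbianchi : ∀ x y z : V, Wv x y z + Wv y z x + Wv z x y = 0)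
    (J : V → V →ₗ[ℝ] V) (hJ : ∀ x y : V, J x y = Wv x y x)
    -- Osserman: constant eigenvalues on the unit sphere
    (hOss : ∀ x y : V, ‖x‖ = 1 → ‖y‖ = 1 → (J x).charpoly = (J y).charpoly)
    -- structural hypotheses abstracting the Weyl tensor of a Riemannian product:
    (hpresB : ∀ x y : V, x ∈ VB → y ∈ VB → ∀ u : V, u ∈ VF → Wv x u y ∈ VB)
    (hpresF : ∀ x : V, x ∈ VB → ∀ u v : V, u ∈ VF → v ∈ VF → Wv x u v ∈ VF)
    (hmixB : ∀ x y : V, x ∈ VB → y ∈ VB → ⟪x, y⟫ = 0 →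
      ∀ u w : V, u ∈ VF → w ∈ VF → W x u y w = 0)
    -- each vector of `V_F` is an eigenvector of `J_W(x)` for unit `x ∈ V_B`, and vice versa
    (heigF : ∀ x : V, x ∈ VB → ‖x‖ = 1 → ∀ u : V, u ∈ VF → ∃ lam : ℝ, J x u = lam • u)
    (heigB : ∀ u : V, u ∈ VF → ‖u‖ = 1 → ∀ x : V, x ∈ VB → ∃ lam : ℝ, J u x = lam • x) :
    ∀ x y z w : V, W x y z w = 0 := by
  subst hVF
  obtain rfl : J = jacobiOperator Wv := funext fun x => LinearMap.ext (hJ x)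
  have hR : IsCurvatureTensor Wv :=
    ⟨by simpa only [hWdef] using hanti2, by simpa only [hWdef] using hpair, hbianchi⟩
  have hB₀ : ∀ x ∈ VB, ∀ u ∈ VBᗮ, Wv x u x = 0 := fun x hx u hu =>
    jacobiOperator_apply_eq_zero_of_disjoint VB.orthogonal_disjoint hx hu
      (hpresB x x hx hx u hu) fun x' hx' hx'1 => heigF x' hx' hx'1 u hu
  have hF₀ : ∀ u ∈ VBᗮ, ∀ x ∈ VB, Wv u x u = 0 := fun u hu x hx =>
    jacobiOperator_apply_eq_zero_of_disjoint VB.orthogonal_disjoint.symm hu hx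
      (hR.apply_swap u x u ▸ VBᗮ.neg_mem (hpresF x hx u u hu hu))
      fun u' hu' hu'1 => heigB u' hu' hu'1 x hx
  have hsplit : ∀ x ∈ VB, ∀ u ∈ VBᗮ, ∀ v, Wv x v u = 0 := fun x hx u hu =>
    hR.apply_eq_zero_of_mem_orthogonal hB₀ hF₀ (by simpa only [hWdef] using hmixB) hx hu
  obtain ⟨x₀, hx₀, hx₀1⟩ := VB.exists_mem_norm_eq_one hB
  obtain ⟨u₀, hu₀, hu₀1⟩ := VBᗮ.exists_mem_norm_eq_one hF
  have hJB : ∀ x ∈ VB, jacobiOperator Wv x = 0 := fun x =>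
    jacobiOperator_eq_zero_of_forall_norm_eq_one fun x hx hx1 =>
      (hR.jacobiOperator_eq_zero_of_isOsserman hOss hsplit hx hu₀ hx1 hu₀1).1
  have hJF : ∀ u ∈ VBᗮ, jacobiOperator Wv u = 0 := fun u =>
    jacobiOperator_eq_zero_of_forall_norm_eq_one fun u hu hu1 =>
      (hR.jacobiOperator_eq_zero_of_isOsserman hOss hsplit hx₀ hu hx₀1 hu1).2
  have hW : Wv = 0 := hR.eq_zero_of_jacobiOperator_eq_zero fun v => by
    obtain ⟨x, hx, u, hu, rfl⟩ := VB.exists_add_mem_mem_orthogonal v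
    rw [hR.jacobiOperator_add (hsplit x hx u hu), hJB x hx, hJF u hu, add_zero]
  simp [hWdef, hW]

/-- A trace-free Osserman algebraic curvature tensor on a Euclidean
space `V = V_B ⊕ V_F` (orthogonal direct sum, both summands nonzero) satisfying the
structural conditions of the Weyl tensor of a Riemannian product (preservation of
the factors by the mixed Jacobi operators, vanishing of the mixed components with
orthogonal arguments, and each factor consisting of eigenvectors for the Jacobi
operators of unit vectors of the other factor) vanishes identically. -/
theorem product_weyl_osserman_vanishes
    {V : Type*} [NormedAddCommGroup V] [InnerProductSpace ℝ V]
    [FiniteDimensional ℝ V] (n : ℕ) (hn : Module.finrank ℝ V = n)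
    (VB : Submodule ℝ V) (VF : Submodule ℝ V) (hVF : VF = VBᗮ)
    (hB : 1 ≤ Module.finrank ℝ VB) (hF : 1 ≤ Module.finrank ℝ VF)
    (Wv : V →ₗ[ℝ] V →ₗ[ℝ] V →ₗ[ℝ] V)
    (W : V → V → V → V → ℝ) (hWdef : ∀ x y z w : V, W x y z w = ⟪Wv x y z, w⟫)
    (hanti1 : ∀ x y z : V, Wv x y z = - Wv y x z)
    (hanti2 : ∀ x y z w : V, W x y z w = - W x y w z)
    (hpair : ∀ x y z w : V, W x y z w = W z w x y)
    (hbianchi : ∀ x y z : V, Wv x y z + Wv y z x + Wv z x y = 0)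
    -- trace-free (zero Ricci contraction)
    (hricci : ∀ (c : OrthonormalBasis (Fin n) ℝ V) (x y : V),
      ∑ i, W x (c i) y (c i) = 0)
    (J : V → V →ₗ[ℝ] V) (hJ : ∀ x y : V, J x y = Wv x y x)
    -- Osserman: constant eigenvalues on the unit sphere
    (hOss : ∀ x y : V, ‖x‖ = 1 → ‖y‖ = 1 → (J x).charpoly = (J y).charpoly)
    -- structural hypotheses abstracting the Weyl tensor of a Riemannian product:
    (hpresB : ∀ x y : V, x ∈ VB → y ∈ VB → ∀ u : V, u ∈ VF → Wv x u y ∈ VB)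
    (hpresF : ∀ x : V, x ∈ VB → ∀ u v : V, u ∈ VF → v ∈ VF → Wv x u v ∈ VF)
    (hmixB : ∀ x y : V, x ∈ VB → y ∈ VB → ⟪x, y⟫ = 0 →
      ∀ u w : V, u ∈ VF → w ∈ VF → W x u y w = 0)
    (hmixF : ∀ u v : V, u ∈ VF → v ∈ VF → ⟪u, v⟫ = 0 →
      ∀ x z : V, x ∈ VB → z ∈ VB → W u x v z = 0)
    -- each vector of `V_F` is an eigenvector of `J_W(x)` for unit `x ∈ V_B`, and vice versa
    (heigF : ∀ x : V, x ∈ VB → ‖x‖ = 1 → ∀ u : V, u ∈ VF → ∃ lam : ℝ, J x u = lam • u)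
    (heigB : ∀ u : V, u ∈ VF → ‖u‖ = 1 → ∀ x : V, x ∈ VB → ∃ lam : ℝ, J u x = lam • x) :
    ∀ x y z w : V, W x y z w = 0 :=
  product_weyl_osserman_vanishes_general VB VF hVF hB hF Wv W hWdef hanti2 hpair hbianchi J hJ hOss
    hpresB hpresF hmixB heigF heigB
end
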